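/- Let Φ_D be a quantum m-stochastic channel on density matrices of order N with m ≥ 2. If ρ_1, ..., ρ_{m−1} are density matrices one of which equals the maximally mixed state ρ_* = I/N, then Φ_D[ρ_1 ⊗ ⋯ ⊗ ρ_{m−1}] = ρ_*. -/

import Mathlib

open Matrix ComplexOrder

/-- The action of a multipartite matrix `D` on `(ℂ^N)^{⊗m}` as a multilinear map:
the output lives in slot `t`, the matrix `ρ s` is fed (via `I ⊗ ρ₁^⊤ ⊗ ⋯`) into each
input slot `s ≠ t`, and all input slots are traced out.  In components,
`(Φ ρ)_{a b} = Σ_{k l : Fin m → Fin N, k t = a, l t = b} D_{k l} Π_{s ≠ t} (ρ s)_{k s, l s}`. -/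
noncomputable def qAct {N m : ℕ} (D : Matrix (Fin m → Fin N) (Fin m → Fin N) ℂ)
    (t : Fin m) (ρ : Fin m → Matrix (Fin N) (Fin N) ℂ) : Matrix (Fin N) (Fin N) ℂ :=
  Matrix.of fun a b => ∑ k : Fin m → Fin N, ∑ l : Fin m → Fin N,
    if k t = a ∧ l t = b then D k l * ∏ s ∈ Finset.univ.erase t, ρ s (k s) (l s) else 0

/-- A density matrix: positive semidefinite with unit trace. -/
def IsDensity {N : ℕ} (ρ : Matrix (Fin N) (Fin N) ℂ) : Prop :=
  ρ.PosSemidef ∧ ρ.trace = 1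

/-- A quantum `m`-stochastic channel: the dynamical matrix `D` is positive semidefinite,
and for every choice of output slot `t`, feeding density matrices into the remaining
slots yields a trace-preserving (hence, with `D ≥ 0`, completely positive) map. -/
def QMStochastic {N m : ℕ} (D : Matrix (Fin m → Fin N) (Fin m → Fin N) ℂ) : Prop :=
  D.PosSemidef ∧
    ∀ (t : Fin m) (ρ : Fin m → Matrix (Fin N) (Fin N) ℂ),
      (∀ s : Fin m, s ≠ t → IsDensity (ρ s)) → (qAct D t ρ).trace = 1

/-! Write `X` for the output of the channel. Pairing `X` entrywise with a density matrix `σ` is the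
full contraction of `D` against `σ` in the output slot and the `ρ s` elsewhere. Read with `s₀` as
output slot instead, where `ρ s₀ = I/N`, the same contraction is `N⁻¹` times the trace of a channel
output, hence `N⁻¹`. A matrix whose pairing with every density matrix is a constant `c` is `c • 1`:
rank-one projections are density matrices, and complex polarization recovers all entries. -/

namespace Matrix

variable {n : Type*} [Fintype n]

theorem eq_zero_of_forall_dotProduct_mulVec_self_eq_zero [DecidableEq n] {A : Matrix n n ℂ}
    (h : ∀ x, star x ⬝ᵥ A *ᵥ x = 0) : A = 0 := by
  have hT : toLpLin 2 2 Aᴴ = 0 := by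
    refine (inner_map_self_eq_zero _).1 fun x => ?_
    rw [toLpLin_apply, EuclideanSpace.inner_eq_star_dotProduct, star_mulVec,
      conjTranspose_conjTranspose, dotProduct_comm, ← dotProduct_mulVec]
    exact h _
  simpa using congrArg (fun T => ((toLpLin 2 2).symm T)ᴴ) hT

theorem sum_mul_apply_eq_trace_mul_of_posSemidef {X : Matrix n n ℂ} {c : ℂ}
    (h : ∀ σ : Matrix n n ℂ, σ.PosSemidef → σ.trace = 1 → ∑ a, ∑ b, σ a b * X a b = c)
    {σ : Matrix n n ℂ} (hσ : σ.PosSemidef) : ∑ a, ∑ b, σ a b * X a b = c * σ.trace := by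
  rcases eq_or_ne σ.trace 0 with htr | htr
  · simp [hσ.trace_eq_zero_iff.1 htr]
  have hnorm := h (σ.trace⁻¹ • σ) (hσ.smul (inv_nonneg.2 hσ.trace_nonneg))
    (by rw [trace_smul, smul_eq_mul, inv_mul_cancel₀ htr])
  simp only [smul_apply, smul_eq_mul, mul_assoc, ← Finset.mul_sum] at hnorm
  rw [← hnorm, mul_comm, mul_inv_cancel_left₀ htr]

theorem sum_mul_apply_vecMulVec_star_self (X : Matrix n n ℂ) (w : n → ℂ) :
    ∑ a, ∑ b, vecMulVec (star w) w a b * X a b = star w ⬝ᵥ X *ᵥ w := by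
  simp only [vecMulVec_apply, dotProduct, mulVec, Finset.mul_sum]
  exact Finset.sum_congr rfl fun a _ => Finset.sum_congr rfl fun b _ => by ring

theorem eq_smul_one_of_sum_mul_apply_eq [DecidableEq n] {X : Matrix n n ℂ} {c : ℂ}
    (h : ∀ σ : Matrix n n ℂ, σ.PosSemidef → σ.trace = 1 → ∑ a, ∑ b, σ a b * X a b = c) :
    X = c • 1 := by
  rw [← sub_eq_zero]
  refine eq_zero_of_forall_dotProduct_mulVec_self_eq_zero fun w => ?_
  have hw := sum_mul_apply_eq_trace_mul_of_posSemidef h (posSemidef_vecMulVec_star_self w)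
  rw [sum_mul_apply_vecMulVec_star_self, trace_vecMulVec] at hw
  rw [sub_mulVec, dotProduct_sub, hw, smul_mulVec, one_mulVec, dotProduct_smul, smul_eq_mul,
    sub_self]

end Matrix

theorem prod_update_apply_apply {ι κ R : Type*} [Fintype ι] [DecidableEq ι] [CommMonoid R]
    (ρ : ι → Matrix κ κ R) (t : ι) (A : Matrix κ κ R) (k l : ι → κ) :
    ∏ s, Function.update ρ t A s (k s) (l s) =
      A (k t) (l t) * ∏ s ∈ Finset.univ.erase t, ρ s (k s) (l s) := by
  rw [← Finset.mul_prod_erase _ _ (Finset.mem_univ t), Function.update_self]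
  congr 1
  refine Finset.prod_congr rfl fun s hs => ?_
  rw [Function.update_of_ne (Finset.ne_of_mem_erase hs)]

/-- `Tr[D (ρ₀ᵀ ⊗ ⋯ ⊗ ρₘ₋₁ᵀ)]`. -/
noncomputable def qContract {N m : ℕ} (D : Matrix (Fin m → Fin N) (Fin m → Fin N) ℂ)
    (ρ : Fin m → Matrix (Fin N) (Fin N) ℂ) : ℂ :=
  ∑ k : Fin m → Fin N, ∑ l : Fin m → Fin N, D k l * ∏ s, ρ s (k s) (l s)

section qContract

variable {N m : ℕ} (D : Matrix (Fin m → Fin N) (Fin m → Fin N) ℂ)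
  (ρ : Fin m → Matrix (Fin N) (Fin N) ℂ)

theorem qContract_update_smul (t : Fin m) (c : ℂ) (A : Matrix (Fin N) (Fin N) ℂ) :
    qContract D (Function.update ρ t (c • A)) = c * qContract D (Function.update ρ t A) := by
  simp only [qContract, prod_update_apply_apply, Matrix.smul_apply, smul_eq_mul, Finset.mul_sum]
  exact Finset.sum_congr rfl fun k _ => Finset.sum_congr rfl fun l _ => by ring

theorem sum_mul_qAct_apply (t : Fin m) (σ : Matrix (Fin N) (Fin N) ℂ) :
    ∑ a, ∑ b, σ a b * qAct D t ρ a b = qContract D (Function.update ρ t σ) := by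
  simp only [qAct, Matrix.of_apply, qContract, prod_update_apply_apply, Finset.mul_sum]
  rw [Finset.sum_comm_cycle]
  refine Finset.sum_congr rfl fun k _ => ?_
  rw [Finset.sum_comm_cycle]
  refine Finset.sum_congr rfl fun l _ => ?_
  simp only [ite_and, mul_ite, mul_zero, Finset.sum_ite_irrel, Finset.sum_ite_eq, Finset.mem_univ,
    if_true, Finset.sum_const_zero]
  ring

theorem trace_qAct (t : Fin m) :
    (qAct D t ρ).trace = qContract D (Function.update ρ t 1) := by
  rw [← sum_mul_qAct_apply]
  simp [Matrix.one_apply, Matrix.trace]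

end qContract

theorem qAct_maximally_mixed {N m : ℕ} (hm : 2 ≤ m)
    (D : Matrix (Fin m → Fin N) (Fin m → Fin N) ℂ) (hD : QMStochastic D)
    (ρ : Fin m → Matrix (Fin N) (Fin N) ℂ)
    (hρ : ∀ s : Fin m, s ≠ ⟨0, by omega⟩ → IsDensity (ρ s))
    (hmix : ∃ s : Fin m, s ≠ ⟨0, by omega⟩ ∧
      ρ s = (N : ℂ)⁻¹ • (1 : Matrix (Fin N) (Fin N) ℂ)) :
    qAct D ⟨0, by omega⟩ ρ = (N : ℂ)⁻¹ • (1 : Matrix (Fin N) (Fin N) ℂ) := by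
  set t₀ : Fin m := ⟨0, by omega⟩
  obtain ⟨s₀, hs₀, hmixed⟩ := hmix
  refine Matrix.eq_smul_one_of_sum_mul_apply_eq fun σ hσ htr => ?_
  set ρ' := Function.update ρ t₀ σ
  have hρ' : ∀ s, s ≠ s₀ → IsDensity (ρ' s) := by
    intro s hs
    rcases eq_or_ne s t₀ with rfl | hst₀
    · simpa [ρ'] using ⟨hσ, htr⟩
    · simpa [ρ', hst₀] using hρ s hst₀
  calc ∑ a, ∑ b, σ a b * qAct D t₀ ρ a b
      = qContract D (Function.update ρ' s₀ ((N : ℂ)⁻¹ • 1)) := by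
        rw [sum_mul_qAct_apply, ← hmixed, ← Function.update_of_ne hs₀ σ ρ, Function.update_eq_self]
    _ = (N : ℂ)⁻¹ * (qAct D s₀ ρ').trace := by rw [qContract_update_smul, trace_qAct]
    _ = (N : ℂ)⁻¹ := by rw [hD.2 s₀ ρ' hρ', mul_one]
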